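/- Let w ∈ L¹(ℝ³) and u, v ∈ L²(ℝ³), and define f(x,y) := u(x) w(x−y) v(y). Then f ∈ L¹(ℝ³ × ℝ³), and for all p, q ∈ ℝ³ its Fourier transform satisfies f̂(p,q) = ∫_{ℝ³} w(z) ĝ_z(p+q) e^{−2πi p·z} dz, where g_z(y) := u(y+z) v(y) belongs to L¹(ℝ³) for every z, and the Fourier transform of an integrable function h is ĥ(ξ) = ∫ h(x) e^{−2πi x·ξ} dx. -/

import Mathlib

open MeasureTheory

noncomputable section

local notation "E" => EuclideanSpace ℝ (Fin 3)

/-- The Fourier transform on `ℝ³`, with the convention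
`ĥ ξ = ∫ h x * exp (-2πi ⟪x, ξ⟫) dx`. -/
def fourier3 (h : E → ℂ) (ξ : E) : ℂ :=
  ∫ x : E, h x * Complex.exp (-(2 * (Real.pi : ℂ) * Complex.I * ((inner ℝ x ξ : ℝ) : ℂ)))

/-- The Fourier transform on `ℝ³ × ℝ³`, with the convention
`f̂ (p, q) = ∬ f x y * exp (-2πi (⟪x, p⟫ + ⟪y, q⟫)) dx dy`. -/
def fourier6 (f : E → E → ℂ) (p q : E) : ℂ :=
  ∫ x : E, ∫ y : E,
    f x y * Complex.exp (-(2 * (Real.pi : ℂ) * Complex.I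
      * (((inner ℝ x p : ℝ) + (inner ℝ y q : ℝ) : ℝ) : ℂ)))

/-! The change of variables `x = z + y` turns the kernel `u x * w (x - y) * v y` into
`w z * (u (y + z) * v y)`. By Hölder, the inner factor has `L¹` norm in `y` at most
`‖u‖₂ ‖v‖₂` uniformly in `z`, so Tonelli gives integrability on the product; then Fubini
in the new variables splits the phase `⟪z + y, p⟫ + ⟪y, q⟫ = ⟪p, z⟫ + ⟪y, p + q⟫`. -/

open scoped ENNReal

namespace MeasureTheory

section Translate

variable {G 𝕜 : Type*} [MeasurableSpace G] [AddGroup G] [MeasurableAdd G] [NormedRing 𝕜]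
  {μ : Measure G} [μ.IsAddRightInvariant] {u v : G → 𝕜}

theorem MemLp.comp_add_right_mul (hu : MemLp u 2 μ) (hv : MemLp v 2 μ) (z : G) :
    MemLp (fun y => u (y + z) * v y) 1 μ :=
  hv.mul' (hu.comp_measurePreserving (measurePreserving_add_right μ z))

theorem eLpNorm_comp_add_right_mul_le (hu : AEStronglyMeasurable u μ)
    (hv : AEStronglyMeasurable v μ) (z : G) :
    eLpNorm (fun y => u (y + z) * v y) 1 μ ≤ eLpNorm u 2 μ * eLpNorm v 2 μ := by
  have hτ := measurePreserving_add_right μ z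
  have holder := eLpNorm_le_eLpNorm_mul_eLpNorm'_of_norm (p := 2) (q := 2) (r := 1)
    (hu.comp_measurePreserving hτ) hv (· * ·) 1
    (.of_forall fun y => by simpa using norm_mul_le _ _)
  rwa [ENNReal.coe_one, one_mul, eLpNorm_comp_measurePreserving hu hτ] at holder

end Translate

theorem Integrable.mul_prod_of_eLpNorm_le {α β 𝕜 : Type*} [MeasurableSpace α]
    [MeasurableSpace β] [NormedDivisionRing 𝕜] {μ : Measure α} {ν : Measure β} [SFinite ν]
    {w : α → 𝕜} {g : α × β → 𝕜} {C : ℝ≥0∞} (hw : Integrable w μ)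
    (hg : AEStronglyMeasurable g (μ.prod ν)) (hC : C ≠ ∞)
    (hbound : ∀ x, eLpNorm (fun y => g (x, y)) 1 ν ≤ C) :
    Integrable (fun q => w q.1 * g q) (μ.prod ν) := by
  refine ⟨(hw.1.comp_quasiMeasurePreserving Measure.quasiMeasurePreserving_fst).mul hg, ?_⟩
  have hsection : ∀ x, ∫⁻ y, ‖w x * g (x, y)‖ₑ ∂ν ≤ ‖w x‖ₑ * C := fun x => by
    simp_rw [enorm_mul]
    rw [lintegral_const_mul' _ _ enorm_ne_top, ← eLpNorm_one_eq_lintegral_enorm]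
    gcongr
    exact hbound x
  calc ∫⁻ q, ‖w q.1 * g q‖ₑ ∂μ.prod ν
      ≤ ∫⁻ x, ∫⁻ y, ‖w x * g (x, y)‖ₑ ∂ν ∂μ := lintegral_prod_le _
    _ ≤ ∫⁻ x, ‖w x‖ₑ * C ∂μ := lintegral_mono hsection
    _ = (∫⁻ x, ‖w x‖ₑ ∂μ) * C := lintegral_mul_const' _ _ hC
    _ < ∞ := ENNReal.mul_lt_top hw.2 hC.lt_top

theorem integral_integral_add_prod {G F : Type*} [MeasurableSpace G] [AddGroup G]
    [MeasurableAdd₂ G] [NormedAddCommGroup F] [NormedSpace ℝ F] {μ : Measure G} [SFinite μ]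
    [μ.IsAddRightInvariant] {f : G → G → F} (hf : Integrable (Function.uncurry f) (μ.prod μ)) :
    ∫ x, ∫ y, f x y ∂μ ∂μ = ∫ z, ∫ y, f (z + y) y ∂μ ∂μ := by
  have hτ := measurePreserving_add_prod μ μ
  have hτf : Integrable (fun q : G × G => f (q.1 + q.2) q.2) (μ.prod μ) :=
    (hτ.integrable_comp hf.1).mpr hf
  calc ∫ x, ∫ y, f x y ∂μ ∂μ = ∫ q, Function.uncurry f q ∂μ.prod μ := integral_integral hf
    _ = ∫ q, Function.uncurry f (q.1 + q.2, q.2) ∂μ.prod μ := by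
      rw [← integral_map hτ.aemeasurable (by rw [hτ.map_eq]; exact hf.1), hτ.map_eq]
    _ = ∫ z, ∫ y, f (z + y) y ∂μ ∂μ :=
      (integral_integral (f := fun z y => f (z + y) y) hτf).symm

theorem integrable_prod_mul_comp_sub_mul {G 𝕜 : Type*} [MeasurableSpace G] [AddCommGroup G]
    [MeasurableAdd₂ G] [MeasurableNeg G] [NormedField 𝕜] {μ : Measure G} [SFinite μ]
    [μ.IsAddLeftInvariant] {w u v : G → 𝕜} (hw : Integrable w μ) (hu : MemLp u 2 μ)
    (hv : MemLp v 2 μ) :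
    Integrable (fun q : G × G => u q.1 * w (q.1 - q.2) * v q.2) (μ.prod μ) := by
  have hf_meas : AEStronglyMeasurable (fun q : G × G => u q.1 * w (q.1 - q.2) * v q.2)
      (μ.prod μ) :=
    ((hu.1.comp_quasiMeasurePreserving Measure.quasiMeasurePreserving_fst).mul
      (hw.1.comp_quasiMeasurePreserving (quasiMeasurePreserving_sub _ _))).mul
      (hv.1.comp_quasiMeasurePreserving Measure.quasiMeasurePreserving_snd)
  have hg_meas : AEStronglyMeasurable (fun q : G × G => u (q.2 + q.1) * v q.2) (μ.prod μ) :=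
    (hu.1.comp_quasiMeasurePreserving (quasiMeasurePreserving_add_swap _ _)).mul
      (hv.1.comp_quasiMeasurePreserving Measure.quasiMeasurePreserving_snd)
  have hsheared := hw.mul_prod_of_eLpNorm_le hg_meas
    (ENNReal.mul_ne_top hu.eLpNorm_ne_top hv.eLpNorm_ne_top)
    (eLpNorm_comp_add_right_mul_le hu.1 hv.1)
  refine ((measurePreserving_add_prod μ μ).integrable_comp hf_meas).mp
    (hsheared.congr (.of_forall fun q => ?_))
  simp only [Function.comp_apply, add_sub_cancel_right, add_comm q.2 q.1]
  ring

end MeasureTheory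

theorem Complex.norm_exp_neg_two_pi_I_mul_ofReal (r : ℝ) :
    ‖Complex.exp (-(2 * (Real.pi : ℂ) * Complex.I * (r : ℂ)))‖ = 1 := by
  rw [show -(2 * (Real.pi : ℂ) * Complex.I * (r : ℂ)) = ((-(2 * Real.pi * r) : ℝ) : ℂ) * Complex.I
    by push_cast; ring, Complex.norm_exp_ofReal_mul_I]

theorem Complex.exp_neg_two_pi_I_inner_shear {V : Type*} [NormedAddCommGroup V]
    [InnerProductSpace ℝ V] (p q z y : V) :
    Complex.exp (-(2 * (Real.pi : ℂ) * Complex.I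
        * (((inner ℝ (z + y) p : ℝ) + (inner ℝ y q : ℝ) : ℝ) : ℂ)))
      = Complex.exp (-(2 * (Real.pi : ℂ) * Complex.I * ((inner ℝ p z : ℝ) : ℂ)))
        * Complex.exp (-(2 * (Real.pi : ℂ) * Complex.I * ((inner ℝ y (p + q) : ℝ) : ℂ))) := by
  rw [← Complex.exp_add, inner_add_left, inner_add_right, real_inner_comm p z]
  push_cast
  ring_nf

/-- **Fourier factorization of the pairing kernel.** For `w ∈ L¹(ℝ³)` and
`u, v ∈ L²(ℝ³)`, the kernel `f (x,y) = u x * w (x-y) * v y` is integrable on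
`ℝ³ × ℝ³`, `g_z (y) = u (y+z) * v y` is integrable for every `z`, and
`f̂ (p,q) = ∫ w z * ĝ_z (p+q) * exp (-2πi ⟪p, z⟫) dz`. -/
theorem fourier_factorization_pairing_kernel
    (w u v : E → ℂ)
    (hw : MemLp w 1 volume)
    (hu : MemLp u 2 volume)
    (hv : MemLp v 2 volume) :
    Integrable (fun z : E × E => u z.1 * w (z.1 - z.2) * v z.2) volume
    ∧ (∀ z : E, Integrable (fun y : E => u (y + z) * v y) volume)
    ∧ (∀ p q : E,
        fourier6 (fun x y => u x * w (x - y) * v y) p q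
          = ∫ z : E, w z * fourier3 (fun y => u (y + z) * v y) (p + q)
              * Complex.exp (-(2 * (Real.pi : ℂ) * Complex.I * ((inner ℝ p z : ℝ) : ℂ)))) := by
  have hf := integrable_prod_mul_comp_sub_mul (memLp_one_iff_integrable.mp hw) hu hv
  refine ⟨hf, fun z => memLp_one_iff_integrable.mp (hu.comp_add_right_mul hv z), fun p q => ?_⟩
  have hphase : Continuous fun q' : E × E => Complex.exp (-(2 * (Real.pi : ℂ) * Complex.I
      * (((inner ℝ q'.1 p : ℝ) + (inner ℝ q'.2 q : ℝ) : ℝ) : ℂ))) := by fun_prop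
  have hG := hf.mul_bdd hphase.aestronglyMeasurable
    (.of_forall fun _ => (Complex.norm_exp_neg_two_pi_I_mul_ofReal _).le)
  rw [fourier6, integral_integral_add_prod hG]
  refine integral_congr_ae (.of_forall fun z => ?_)
  simp only [add_sub_cancel_right, Complex.exp_neg_two_pi_I_inner_shear]
  rw [fourier3, ← integral_const_mul, ← integral_mul_const]
  refine integral_congr_ae (.of_forall fun y => ?_)
  simp only [add_comm z y]
  ring
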